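/- If $M \in \mathbb{R}^{d\times d}$ and the entrywise exponential $K = (e^{-m_{ij}})$ is positive semidefinite, then the soft-minimum transportation kernel $(r,c) \mapsto \exp\left(-\operatorname{softmin}_{X \in \mathbb{U}(r,c)} \langle X, M\rangle\right)$ is a positive definite kernel on $\Sigma_d^N$, where $\operatorname{softmin}_i u_i := -\log \sum_i e^{-u_i}$. -/

import Mathlib

open Finset in
/-- The finite set `𝕌(r,c)` of nonnegative integral `d × d` matrices with row sums `r`
and column sums `c` (every entry of such a matrix is at most the total mass). -/
def UTables (d : ℕ) (r c : Fin d → ℕ) : Finset (Fin d → Fin d → ℕ) :=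
  (Fintype.piFinset fun _ : Fin d => Fintype.piFinset fun _ : Fin d =>
      Finset.range ((∑ i, r i) + 1)).filter
    (fun X => (∀ i, ∑ j, X i j = r i) ∧ (∀ j, ∑ i, X i j = c j))

/-! Here `exp(-softmin_X ⟨X, M⟩) = ∑_{X ∈ 𝕌(r,c)} ∏ K_ij ^ X_ij` with `K = (e^{-m_ij})`.
The words `w : Fin N → Fin d × Fin d` with letter counts `X` form a single orbit of `Sym(N)`,
so by Burnside's lemma exactly `N!` pairs `(σ, w)` satisfy `w ∘ σ = w`. Summing over the tables
`X` with margins `r, c`, `N!` times the kernel becomes `∑_σ ∑_{u,v} ∏_k K (u k) (v k)`, where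
`u, v : Fin N → Fin d` are `σ`-invariant words with letter counts `r, c`. Each summand is a
compression of the `N`-th Kronecker power of `K`, hence positive semidefinite. -/

open Finset

section FiberCard

variable {ι C : Type*} [Fintype ι] [DecidableEq C]

def fiberCard (w : ι → C) (c : C) : ℕ := #{k | w k = c}

theorem fiberCard_eq_card_subtype (w : ι → C) (c : C) :
    fiberCard w c = Fintype.card {k // w k = c} :=
  (Fintype.card_subtype _).symm

theorem fiberCard_comp_perm (w : ι → C) (σ : Equiv.Perm ι) :
    fiberCard (w ∘ σ) = fiberCard w := by
  funext c
  simp only [fiberCard_eq_card_subtype]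
  exact Fintype.card_congr (σ.subtypeEquiv fun _ => Iff.rfl)

theorem prod_comp_eq_prod_pow_fiberCard {M : Type*} [CommMonoid M] [Fintype C]
    (w : ι → C) (f : C → M) : ∏ k, f (w k) = ∏ c, f c ^ fiberCard w c := by
  rw [← prod_fiberwise_of_maps_to' (t := univ) fun _ _ => mem_univ _]
  simp only [prod_const, fiberCard]

theorem exists_fiberCard_eq [Fintype C] (X : C → ℕ) (hX : ∑ c, X c = Fintype.card ι) :
    ∃ w : ι → C, fiberCard w = X := by
  have e : (Σ c, Fin (X c)) ≃ ι := Fintype.equivOfCardEq (by simp [hX])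
  refine ⟨fun k => (e.symm k).1, funext fun c => ?_⟩
  rw [fiberCard_eq_card_subtype,
    Fintype.card_congr ((e.symm.subtypeEquiv fun _ => Iff.rfl).trans (Equiv.sigmaSubtype c))]
  simp

theorem exists_perm_comp_eq_of_fiberCard_eq {w w' : ι → C} (h : fiberCard w = fiberCard w') :
    ∃ σ : Equiv.Perm ι, w ∘ σ = w' := by
  have fib : ∀ c, {k // w' k = c} ≃ {k // w k = c} := fun c =>
    Fintype.equivOfCardEq (by rw [← fiberCard_eq_card_subtype, ← fiberCard_eq_card_subtype, h])
  refine ⟨(Equiv.sigmaFiberEquiv w').symm.trans ((Equiv.sigmaCongrRight fib).trans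
    (Equiv.sigmaFiberEquiv w)), funext fun k => ?_⟩
  exact (fib (w' k) ⟨k, rfl⟩).2

theorem fiberCard_fst {α β : Type*} [Fintype β] [DecidableEq α] [DecidableEq β]
    (w : ι → α × β) (a : α) : fiberCard (fun k => (w k).1) a = ∑ b, fiberCard w (a, b) := by
  rw [fiberCard, card_eq_sum_card_fiberwise (f := fun k => (w k).2) (t := univ)
    fun _ _ => mem_univ _]
  simp only [fiberCard, filter_filter, Prod.ext_iff]

theorem fiberCard_snd {α β : Type*} [Fintype α] [DecidableEq α] [DecidableEq β]
    (w : ι → α × β) (b : β) : fiberCard (fun k => (w k).2) b = ∑ a, fiberCard w (a, b) := by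
  rw [fiberCard, card_eq_sum_card_fiberwise (f := fun k => (w k).1) (t := univ)
    fun _ _ => mem_univ _]
  simp only [fiberCard, filter_filter, Prod.ext_iff, and_comm]

end FiberCard

section Burnside

open scoped Nat

variable {ι C : Type*}

attribute [local instance] arrowAction

private theorem perm_smul_eq_comp_inv (σ : Equiv.Perm ι) (w : ι → C) : σ • w = w ∘ ⇑σ⁻¹ := rfl

variable [Fintype ι] [DecidableEq ι] [Fintype C] [DecidableEq C]

def fiberCardClass (X : C → ℕ) : SubMulAction (Equiv.Perm ι) (ι → C) where
  carrier := {w | fiberCard w = X}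
  smul_mem' σ w hw := (fiberCard_comp_perm w σ⁻¹).trans hw

instance (X : C → ℕ) : MulAction.IsPretransitive (Equiv.Perm ι) (fiberCardClass (ι := ι) X) where
  exists_smul_eq w w' := by
    obtain ⟨τ, hτ⟩ := exists_perm_comp_eq_of_fiberCard_eq (w.2.trans w'.2.symm)
    exact ⟨τ⁻¹, Subtype.ext <| by rw [SubMulAction.val_smul, perm_smul_eq_comp_inv, inv_inv, hτ]⟩

theorem sum_card_fixed_of_fiberCard_eq (X : C → ℕ) (hX : ∑ c, X c = Fintype.card ι) :
    ∑ σ : Equiv.Perm ι, #{w : ι → C | fiberCard w = X ∧ w ∘ σ = w} = (Fintype.card ι)! := by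
  classical
  obtain ⟨w₀, hw₀⟩ := exists_fiberCard_eq X hX
  have : Nonempty (fiberCardClass (ι := ι) X) := ⟨⟨w₀, hw₀⟩⟩
  have hunique := (MulAction.pretransitive_iff_unique_quotient_of_nonempty (Equiv.Perm ι)
    (fiberCardClass (ι := ι) X)).mp inferInstance
  have hburnside := MulAction.sum_card_fixedBy_eq_card_orbits_mul_card_group (Equiv.Perm ι)
    (fiberCardClass (ι := ι) X)
  rw [Fintype.card_eq_one_iff_nonempty_unique.mpr hunique, one_mul, Fintype.card_perm] at hburnside
  -- `σ • w = w ∘ σ⁻¹`, so the fixed points of `σ⁻¹` are the words with `w ∘ σ = w`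
  rw [← hburnside, ← Equiv.sum_comp (Equiv.inv _)]
  refine sum_congr rfl fun σ _ => ?_
  rw [← Fintype.card_subtype]
  refine Fintype.card_congr <| (Equiv.subtypeSubtypeEquivSubtypeInter
    (· ∈ fiberCardClass X) (fun w => w ∘ ⇑σ⁻¹ = w)).symm.trans
      (Equiv.subtypeEquivRight fun w => ?_)
  rw [MulAction.mem_fixedBy, Subtype.ext_iff, SubMulAction.val_smul, perm_smul_eq_comp_inv]

theorem sum_perm_sum_fixed_prod_eq {R : Type*} [CommSemiring R] (X : C → ℕ)
    (hX : ∑ c, X c = Fintype.card ι) (f : C → R) :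
    ∑ σ : Equiv.Perm ι, ∑ w : ι → C with fiberCard w = X ∧ w ∘ σ = w, ∏ k, f (w k) =
      (Fintype.card ι)! * ∏ c, f c ^ X c := by
  calc _ = ∑ σ : Equiv.Perm ι, #{w : ι → C | fiberCard w = X ∧ w ∘ σ = w} • ∏ c, f c ^ X c := by
        refine sum_congr rfl fun σ _ => ?_
        rw [← sum_const]
        refine sum_congr rfl fun w hw => ?_
        rw [prod_comp_eq_prod_pow_fiberCard, (mem_filter.1 hw).2.1]
    _ = _ := by rw [← sum_smul, sum_card_fixed_of_fiberCard_eq X hX, nsmul_eq_mul]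

end Burnside

section Kernels

variable {S R : Type*} [CommRing R] [PartialOrder R] [StarRing R]

def IsPosSemidefKernel (k : S → S → R) : Prop :=
  ∀ (n : ℕ) (x : Fin n → S), (Matrix.of fun p q => k (x p) (x q)).PosSemidef

namespace IsPosSemidefKernel

theorem comp {S' : Type*} {k : S → S → R} (hk : IsPosSemidefKernel k) (f : S' → S) :
    IsPosSemidefKernel fun r c => k (f r) (f c) :=
  fun n x => hk n (f ∘ x)

theorem sum [AddLeftMono R] {κ : Type*} {k : κ → S → S → R} (s : Finset κ)
    (hk : ∀ i ∈ s, IsPosSemidefKernel (k i)) : IsPosSemidefKernel fun r c => ∑ i ∈ s, k i r c := by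
  intro n x
  convert Matrix.posSemidef_sum s fun i hi => hk i hi n x
  ext p q
  simp [Matrix.sum_apply]

theorem const_mul [StarOrderedRing R] {k : S → S → R} (hk : IsPosSemidefKernel k) {t : R}
    (ht : 0 ≤ t) : IsPosSemidefKernel fun r c => t * k r c := by
  intro n x
  convert (hk n x).smul ht
  ext p q
  simp

theorem sum_mul_mul_nonneg {k : S → S → R} (hk : IsPosSemidefKernel k) {n : ℕ} (x : Fin n → S)
    (a : Fin n → R) : 0 ≤ ∑ p, ∑ q, star (a p) * a q * k (x p) (x q) := by
  convert (hk n x).dotProduct_mulVec_nonneg a using 1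
  simp only [dotProduct, Matrix.mulVec, Pi.star_apply, Matrix.of_apply, mul_sum]
  refine sum_congr rfl fun p _ => sum_congr rfl fun q _ => ?_
  ring

end IsPosSemidefKernel

theorem Matrix.PosSemidef.isPosSemidefKernel_fiberSum {T : Type*} [Fintype T] [DecidableEq S]
    {P : Matrix T T R} (hP : P.PosSemidef) (g : T → S) (π : T → Prop) [DecidablePred π] :
    IsPosSemidefKernel fun r c => ∑ u with g u = r ∧ π u, ∑ v with g v = c ∧ π v, P u v := by
  intro n x
  let A : Matrix (Fin n) T R := Matrix.of fun p u => if g u = x p ∧ π u then 1 else 0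
  convert hP.mul_mul_conjTranspose_same A
  ext p q
  simp only [Matrix.mul_apply, sum_mul, Matrix.conjTranspose_apply]
  rw [sum_comm]
  simp only [A, Matrix.of_apply, sum_filter, ite_mul, mul_ite, one_mul, zero_mul, mul_one,
    mul_zero, star_one, star_zero, apply_ite star]
  refine sum_congr rfl fun u _ => ?_
  split_ifs <;> simp

open scoped ComplexOrder MatrixOrder in
theorem Matrix.PosSemidef.piKronecker {𝕜 α : Type*} [RCLike 𝕜] [Fintype α] [DecidableEq α]
    {K : Matrix α α 𝕜} (hK : K.PosSemidef) (ι : Type*) [Fintype ι] [DecidableEq ι] :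
    (Matrix.of fun u v : ι → α => ∏ k, K (u k) (v k)).PosSemidef := by
  obtain ⟨B, rfl⟩ := CStarAlgebra.nonneg_iff_eq_star_mul_self.mp hK.nonneg
  convert posSemidef_conjTranspose_mul_self (Matrix.of fun a u : ι → α => ∏ k, B (a k) (u k))
  ext u v
  simp only [Matrix.of_apply, Matrix.mul_apply, Matrix.conjTranspose_apply, star_prod,
    Matrix.star_eq_conjTranspose, Fintype.prod_sum, prod_mul_distrib]

end Kernels

section UTables

variable {d : ℕ} {r c : Fin d → ℕ}

theorem mem_UTables_iff {X : Fin d → Fin d → ℕ} :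
    X ∈ UTables d r c ↔ (∀ i, ∑ j, X i j = r i) ∧ ∀ j, ∑ i, X i j = c j := by
  refine mem_filter.trans ⟨And.right, fun h => ⟨?_, h⟩⟩
  simp only [Fintype.mem_piFinset, mem_range, Nat.lt_succ_iff]
  intro i j
  calc X i j ≤ ∑ j', X i j' := single_le_sum (fun _ _ => Nat.zero_le _) (mem_univ j)
    _ = r i := h.1 i
    _ ≤ ∑ i', r i' := single_le_sum (fun _ _ => Nat.zero_le _) (mem_univ i)

theorem curry_fiberCard_mem_UTables_iff {ι : Type*} [Fintype ι] (w : ι → Fin d × Fin d) :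
    Function.curry (fiberCard w) ∈ UTables d r c ↔
      fiberCard (fun k => (w k).1) = r ∧ fiberCard (fun k => (w k).2) = c := by
  simp only [mem_UTables_iff, funext_iff, Function.curry_apply, fiberCard_fst, fiberCard_snd]

theorem UTables_nonempty (h : ∑ i, r i = ∑ j, c j) : (UTables d r c).Nonempty := by
  obtain ⟨u, hu⟩ := exists_fiberCard_eq (ι := Fin (∑ i, r i)) r (by simp)
  obtain ⟨v, hv⟩ := exists_fiberCard_eq (ι := Fin (∑ i, r i)) c (by simp [h])
  exact ⟨_, (curry_fiberCard_mem_UTables_iff fun k => (u k, v k)).2 ⟨hu, hv⟩⟩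

end UTables

section TableIdentity

open scoped Nat

variable {ι : Type*} [Fintype ι] [DecidableEq ι] {d : ℕ}

theorem sum_fixed_sum_fixed_eq_sum_fixed_zip {R : Type*} [CommSemiring R]
    (K : Fin d → Fin d → R) (r c : Fin d → ℕ) (σ : Equiv.Perm ι) :
    ∑ u : ι → Fin d with fiberCard u = r ∧ u ∘ σ = u,
      ∑ v : ι → Fin d with fiberCard v = c ∧ v ∘ σ = v, ∏ k, K (u k) (v k) =
    ∑ w : ι → Fin d × Fin d with Function.curry (fiberCard w) ∈ UTables d r c ∧ w ∘ σ = w,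
      ∏ k, K (w k).1 (w k).2 := by
  rw [← sum_product', ← filter_product, univ_product_univ]
  refine sum_equiv (Equiv.arrowProdEquivProdArrow _ _ _).symm (fun x => ?_) fun _ _ => rfl
  obtain ⟨u, v⟩ := x
  simp only [mem_filter, mem_univ, true_and, curry_fiberCard_mem_UTables_iff]
  change _ ↔ (fiberCard u = r ∧ fiberCard v = c) ∧ (fun k => (u k, v k)) ∘ σ = fun k => (u k, v k)
  simp only [funext_iff, Function.comp_apply, Prod.ext_iff, forall_and]
  tauto

theorem factorial_mul_sum_UTables_prod_pow {R : Type*} [CommSemiring R] (K : Fin d → Fin d → R)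
    {r c : Fin d → ℕ} (hr : ∑ i, r i = Fintype.card ι) :
    (Fintype.card ι)! * ∑ X ∈ UTables d r c, ∏ i, ∏ j, K i j ^ X i j =
      ∑ σ : Equiv.Perm ι, ∑ u : ι → Fin d with fiberCard u = r ∧ u ∘ σ = u,
        ∑ v : ι → Fin d with fiberCard v = c ∧ v ∘ σ = v, ∏ k, K (u k) (v k) := by
  have hfibers (σ : Equiv.Perm ι) :
      ∑ w : ι → Fin d × Fin d with Function.curry (fiberCard w) ∈ UTables d r c ∧ w ∘ σ = w,
        ∏ k, K (w k).1 (w k).2 =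
      ∑ X ∈ UTables d r c, ∑ w : ι → Fin d × Fin d with
        fiberCard w = Function.uncurry X ∧ w ∘ σ = w, ∏ k, K (w k).1 (w k).2 := by
    rw [← sum_fiberwise_of_maps_to (g := fun w => Function.curry (fiberCard w))
      fun w hw => (mem_filter.1 hw).2.1]
    refine sum_congr rfl fun X hX => sum_congr (ext fun w => ?_) fun _ _ => rfl
    simp only [mem_filter, mem_univ, true_and]
    constructor
    · rintro ⟨⟨-, hσ⟩, rfl⟩
      exact ⟨(Function.uncurry_curry _).symm, hσ⟩
    · rintro ⟨hw, hσ⟩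
      rw [hw, Function.curry_uncurry]
      exact ⟨⟨hX, hσ⟩, rfl⟩
  have hburnside (X) (hX : X ∈ UTables d r c) :
      ∑ σ : Equiv.Perm ι, ∑ w : ι → Fin d × Fin d with
        fiberCard w = Function.uncurry X ∧ w ∘ σ = w, ∏ k, K (w k).1 (w k).2 =
      (Fintype.card ι)! * ∏ i, ∏ j, K i j ^ X i j := by
    have hX_sum : ∑ x, Function.uncurry X x = Fintype.card ι := by
      rw [Fintype.sum_prod_type, ← hr]
      exact sum_congr rfl fun i _ => (mem_UTables_iff.1 hX).1 i
    exact (sum_perm_sum_fixed_prod_eq _ hX_sum (Function.uncurry K)).trans <| by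
      rw [Fintype.prod_prod_type]; rfl
  simp only [sum_fixed_sum_fixed_eq_sum_fixed_zip, hfibers]
  rw [sum_comm, mul_sum]
  exact (sum_congr rfl hburnside).symm

end TableIdentity

open scoped Nat in
theorem isPosSemidefKernel_sum_UTables_prod_pow {d : ℕ} {K : Matrix (Fin d) (Fin d) ℝ}
    (hK : K.PosSemidef) (N : ℕ) :
    IsPosSemidefKernel fun r c : {r : Fin d → ℕ // ∑ i, r i = N} =>
      ∑ X ∈ UTables d r c, ∏ i, ∏ j, K i j ^ X i j := by
  have hσ (σ : Equiv.Perm (Fin N)) : IsPosSemidefKernel fun r c : Fin d → ℕ =>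
      ∑ u : Fin N → Fin d with fiberCard u = r ∧ u ∘ σ = u,
        ∑ v : Fin N → Fin d with fiberCard v = c ∧ v ∘ σ = v, ∏ k, K (u k) (v k) :=
    (hK.piKronecker (Fin N)).isPosSemidefKernel_fiberSum fiberCard fun u => u ∘ σ = u
  convert ((IsPosSemidefKernel.sum univ fun σ _ => hσ σ).comp Subtype.val).const_mul
    (inv_nonneg.2 (Nat.cast_nonneg (N !))) using 3 with r c
  rw [← factorial_mul_sum_UTables_prod_pow K (r.2.trans (Fintype.card_fin N).symm),
    Fintype.card_fin, inv_mul_cancel_left₀ (by positivity)]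

theorem Real.exp_neg_sum_sum_mul {α β : Type*} [Fintype α] [Fintype β] (X : α → β → ℕ)
    (M : α → β → ℝ) :
    Real.exp (-∑ i, ∑ j, (X i j : ℝ) * M i j) = ∏ i, ∏ j, Real.exp (-M i j) ^ X i j := by
  simp only [← sum_neg_distrib, Real.exp_sum, ← Real.exp_nat_mul, mul_neg]

/-- if the entrywise exponential `K = (e^{-m_{ij}})` of `-M` is positive
semidefinite, then the soft-minimum transportation kernel
`(r,c) ↦ exp(-softmin_{X ∈ 𝕌(r,c)} ⟨X,M⟩)`, with
`softminᵢ uᵢ = -log ∑ᵢ e^{-uᵢ}`, is a positive definite kernel on `Σ_d^N`. -/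
theorem stmt19 (d N : ℕ) (M : Matrix (Fin d) (Fin d) ℝ)
    (hK : (Matrix.of fun i j => Real.exp (-M i j)).PosSemidef)
    (n : ℕ) (x : Fin n → {r : Fin d → ℕ // ∑ i, r i = N}) (coef : Fin n → ℝ) :
    0 ≤ ∑ p, ∑ q, coef p * coef q *
      Real.exp (-(-Real.log (∑ X ∈ UTables d (x p).1 (x q).1,
        Real.exp (-∑ i, ∑ j, (X i j : ℝ) * M i j)))) := by
  have hsoftmin (r c : {r : Fin d → ℕ // ∑ i, r i = N}) :
      Real.exp (-(-Real.log (∑ X ∈ UTables d r c, Real.exp (-∑ i, ∑ j, (X i j : ℝ) * M i j)))) =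
        ∑ X ∈ UTables d r c, ∏ i, ∏ j, Real.exp (-M i j) ^ X i j := by
    rw [neg_neg, Real.exp_log (sum_pos (fun _ _ => Real.exp_pos _)
      (UTables_nonempty (r.2.trans c.2.symm)))]
    exact sum_congr rfl fun X _ => Real.exp_neg_sum_sum_mul X M
  simp only [hsoftmin]
  simpa using (isPosSemidefKernel_sum_UTables_prod_pow hK N).sum_mul_mul_nonneg x coef
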